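/- arXiv:2605.12084 — 2 statements merged into one kernel-verified Lean document; each statement's English description precedes it below -/
import Mathlib

section
/- Lower bound for the Schur-complement trace: if F has blocks F_kk ≻ 0, F_k̄k̄ ≻ 0, and β := ||F_kk^{-1/2} F_kk̄ F_k̄k̄^{-1/2}||₂² satisfies β < 1, then tr(F_kk − F_kk̄ F_k̄k̄^{-1} F_k̄k) ≥ (1 − β) · tr(F_kk). -/
open Matrix

/-- The matrix square root of a positive semidefinite matrix, as defined in older Mathlib. -/
noncomputable def Matrix.PosSemidef.sqrt {n : Type*} [Fintype n] [DecidableEq n] {𝕜 : Type*}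
    [RCLike 𝕜] [PartialOrder 𝕜] {A : Matrix n n 𝕜} (hA : A.PosSemidef) : Matrix n n 𝕜 :=
  hA.1.eigenvectorUnitary.1 * diagonal ((↑) ∘ (√·) ∘ hA.1.eigenvalues) *
    (star hA.1.eigenvectorUnitary : Matrix n n 𝕜)

theorem Matrix.isHermitian_transpose_mul_self {m n α : Type*} [CommSemiring α] [StarRing α]
    [TrivialStar α] [Fintype m] (A : Matrix m n α) : (Aᵀ * A).IsHermitian := by
  rw [IsHermitian, conjTranspose_eq_transpose_of_trivial, transpose_mul, transpose_transpose]

private lemma psd_sqrt_mul_self {m : Type*} [Fintype m] [DecidableEq m] {A : Matrix m m ℝ}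
    (hA : A.PosSemidef) : hA.sqrt * hA.sqrt = A := by
  unfold Matrix.PosSemidef.sqrt
  set U := (hA.1.eigenvectorUnitary : Matrix m m ℝ) with hU
  have hUU : star U * U = 1 := (Matrix.mem_unitaryGroup_iff').mp hA.1.eigenvectorUnitary.2
  set D := diagonal ((↑) ∘ (√·) ∘ hA.1.eigenvalues : m → ℝ) with hD
  have hDD : D * D = diagonal (RCLike.ofReal ∘ hA.1.eigenvalues) := by
    rw [hD, diagonal_mul_diagonal]; congr 1; funext i
    simp [Real.mul_self_sqrt (hA.eigenvalues_nonneg i)]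
  have hspec : A = U * diagonal (RCLike.ofReal ∘ hA.1.eigenvalues) * star U :=
    hA.1.spectral_theorem
  calc U * D * star U * (U * D * star U) = U * D * (star U * U) * D * star U := by
        simp only [Matrix.mul_assoc]
    _ = A := by rw [hUU, Matrix.mul_one, Matrix.mul_assoc U D D, hDD, ← hspec]

private lemma psd_sqrt_hermitian {m : Type*} [Fintype m] [DecidableEq m] {A : Matrix m m ℝ}
    (hA : A.PosSemidef) : hA.sqrt.IsHermitian := by
  unfold Matrix.PosSemidef.sqrt
  rw [star_eq_conjTranspose]
  exact isHermitian_mul_mul_conjTranspose _ (isHermitian_diagonal _)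

section Aux

variable {n p : ℕ}

private lemma dot_self_nonneg (x : Fin n → ℝ) : 0 ≤ x ⬝ᵥ x :=
  Finset.sum_nonneg fun i _ => mul_self_nonneg (x i)

/-- trace of a real PSD matrix is nonnegative -/
private lemma psd_trace_nonneg {P : Matrix (Fin n) (Fin n) ℝ} (h : P.PosSemidef) :
    0 ≤ P.trace := by
  refine Finset.sum_nonneg fun i _ => ?_
  exact h.diag_nonneg

/-- If all eigenvalues of a real symmetric matrix are at most `β`, then `β • 1 - H` is PSD. -/
private lemma smul_one_sub_posSemidef {H : Matrix (Fin n) (Fin n) ℝ} (hH : H.IsHermitian)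
    {β : ℝ} (hb : ∀ i, hH.eigenvalues i ≤ β) : (β • (1 : Matrix (Fin n) (Fin n) ℝ) - H).PosSemidef := by
  set U := (hH.eigenvectorUnitary : Matrix (Fin n) (Fin n) ℝ) with hU
  have hUU : U * star U = 1 := (Matrix.mem_unitaryGroup_iff).mp hH.eigenvectorUnitary.2
  have key : β • (1 : Matrix (Fin n) (Fin n) ℝ) - H
      = U * diagonal (fun i => β - hH.eigenvalues i) * star U := by
    have hd : diagonal (fun i => β - hH.eigenvalues i)
        = β • (1 : Matrix (Fin n) (Fin n) ℝ) - diagonal (RCLike.ofReal ∘ hH.eigenvalues) := by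
      rw [smul_one_eq_diagonal, ← diagonal_sub]
      congr 1
    rw [hd, mul_sub, sub_mul, mul_smul_comm, mul_one, smul_mul_assoc, hUU]
    congr 1; exact hH.spectral_theorem
  rw [key]
  apply Matrix.PosSemidef.mul_mul_conjTranspose_same
  exact Matrix.posSemidef_diagonal_iff.mpr fun i => sub_nonneg.mpr (hb i)

/-- transfer `β•1 - MᴴM ⪰ 0` to `β•1 - MMᴴ ⪰ 0`. -/
private lemma transfer {M : Matrix (Fin n) (Fin p) ℝ} {β : ℝ} (hb0 : 0 ≤ β)
    (h : (β • (1 : Matrix (Fin p) (Fin p) ℝ) - Mᴴ * M).PosSemidef) :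
    (β • (1 : Matrix (Fin n) (Fin n) ℝ) - M * Mᴴ).PosSemidef := by
  refine posSemidef_iff_dotProduct_mulVec.mpr ⟨?_, ?_⟩
  · have h1 : (β • (1 : Matrix (Fin n) (Fin n) ℝ)).IsHermitian := by
      rw [smul_one_eq_diagonal]; exact isHermitian_diagonal _
    exact h1.sub (Matrix.isHermitian_mul_conjTranspose_self M)
  · intro x
    have hxs : star x = x := by
      funext i; simp
    set y := Mᴴ *ᵥ x with hy
    set z := M *ᵥ y with hz
    -- from h applied to y : z ⬝ᵥ z ≤ β * (y ⬝ᵥ y)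
    have h1 : z ⬝ᵥ z ≤ β * (y ⬝ᵥ y) := by
      have := h.dotProduct_mulVec_nonneg y
      have hys : star y = y := by funext i; simp
      rw [hys, sub_mulVec, dotProduct_sub, smul_mulVec, one_mulVec, dotProduct_smul,
        sub_nonneg, ← mulVec_mulVec, ← hz] at this
      have hzz : y ⬝ᵥ (Mᴴ *ᵥ z) = z ⬝ᵥ z := by
        rw [dotProduct_mulVec, ← mulVec_transpose]
        have : Mᴴᵀ = M := by
          rw [conjTranspose_eq_transpose_of_trivial, transpose_transpose]
        rw [this, ← hz, dotProduct_comm]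
      rw [hzz] at this
      simpa using this
    -- x ⬝ᵥ z = y ⬝ᵥ y
    have h2 : x ⬝ᵥ z = y ⬝ᵥ y := by
      rw [hz, dotProduct_mulVec, ← mulVec_transpose, ← conjTranspose_eq_transpose_of_trivial,
        ← hy]
    -- Cauchy–Schwarz : (x ⬝ᵥ z)^2 ≤ (x ⬝ᵥ x) * (z ⬝ᵥ z)
    have hcs : (x ⬝ᵥ z) ^ 2 ≤ (x ⬝ᵥ x) * (z ⬝ᵥ z) := by
      have := Finset.sum_mul_sq_le_sq_mul_sq Finset.univ x z
      simpa [dotProduct, sq] using this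
    have hyy : y ⬝ᵥ y ≤ β * (x ⬝ᵥ x) := by
      rcases eq_or_lt_of_le (dot_self_nonneg y) with hy0 | hy0
      · rw [← hy0]
        exact mul_nonneg hb0 (dot_self_nonneg x)
      · have h3 : (y ⬝ᵥ y) ^ 2 ≤ (x ⬝ᵥ x) * (β * (y ⬝ᵥ y)) := by
          calc (y ⬝ᵥ y) ^ 2 = (x ⬝ᵥ z) ^ 2 := by rw [h2]
            _ ≤ (x ⬝ᵥ x) * (z ⬝ᵥ z) := hcs
            _ ≤ (x ⬝ᵥ x) * (β * (y ⬝ᵥ y)) :=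
                mul_le_mul_of_nonneg_left h1 (dot_self_nonneg x)
        nlinarith [hy0]
    have hgoal : x ⬝ᵥ ((M * Mᴴ) *ᵥ x) = y ⬝ᵥ y := by
      rw [← mulVec_mulVec]; exact h2
    rw [hxs, sub_mulVec, dotProduct_sub, smul_mulVec, one_mulVec, dotProduct_smul,
      sub_nonneg, hgoal, smul_eq_mul]
    exact hyy

end Aux

/-- Lower bound for the Schur-complement trace: if `F = [[A, B], [Bᵀ, C]]` is
symmetric PSD with `A ≻ 0`, `C ≻ 0`, and `β = ‖A^{-1/2} B C^{-1/2}‖₂² < 1`,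
then `tr(A − B C⁻¹ Bᵀ) ≥ (1 − β) tr(A)`. -/
theorem schur_trace_lower_bound
    {n p : ℕ} (A : Matrix (Fin n) (Fin n) ℝ) (B : Matrix (Fin n) (Fin p) ℝ)
    (C : Matrix (Fin p) (Fin p) ℝ)
    (hF : (Matrix.fromBlocks A B Bᵀ C).PosSemidef)
    (hA : A.PosDef) (hC : C.PosDef)
    (M : Matrix (Fin n) (Fin p) ℝ)
    (hM : M = hA.posSemidef.sqrt⁻¹ * B * hC.posSemidef.sqrt⁻¹)
    (β : ℝ)
    (hβ : β = ⨆ i, (Matrix.isHermitian_transpose_mul_self M).eigenvalues i)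
    (hβ1 : β < 1) :
    (1 - β) * A.trace ≤ (A - B * C⁻¹ * Bᵀ).trace := by
  classical
  set S := hA.posSemidef.sqrt with hSdef
  set T := hC.posSemidef.sqrt with hTdef
  have hSS : S * S = A := psd_sqrt_mul_self hA.posSemidef
  have hTT : T * T = C := psd_sqrt_mul_self hC.posSemidef
  have hSdet : IsUnit S.det := by
    have : S.det * S.det = A.det := by rw [← det_mul, hSS]
    have hApos := hA.det_pos
    refine isUnit_iff_ne_zero.mpr fun h0 => ?_
    rw [h0, mul_zero] at this
    exact (ne_of_gt hApos) this.symm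
  have hTdet : IsUnit T.det := by
    have : T.det * T.det = C.det := by rw [← det_mul, hTT]
    have hCpos := hC.det_pos
    refine isUnit_iff_ne_zero.mpr fun h0 => ?_
    rw [h0, mul_zero] at this
    exact (ne_of_gt hCpos) this.symm
  have hSinv : S * S⁻¹ = 1 := mul_nonsing_inv S hSdet
  have hSinv' : S⁻¹ * S = 1 := nonsing_inv_mul S hSdet
  have hTinv : T * T⁻¹ = 1 := mul_nonsing_inv T hTdet
  have hTinv' : T⁻¹ * T = 1 := nonsing_inv_mul T hTdet
  -- B = S * M * T
  have hB : B = S * M * T := by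
    rw [hM]
    symm
    calc S * (S⁻¹ * B * T⁻¹) * T = (S * S⁻¹) * B * (T⁻¹ * T) := by
          simp only [Matrix.mul_assoc]
      _ = B := by rw [hSinv, hTinv', Matrix.mul_one, Matrix.one_mul]
  have hSh : Sᵀ = S := by
    rw [← conjTranspose_eq_transpose_of_trivial]
    exact psd_sqrt_hermitian hA.posSemidef
  have hTh : Tᵀ = T := by
    rw [← conjTranspose_eq_transpose_of_trivial]
    exact psd_sqrt_hermitian hC.posSemidef
  -- T * C⁻¹ * T = 1
  have hTCT : T * C⁻¹ * T = 1 := by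
    rw [← hTT, Matrix.mul_inv_rev]
    calc T * (T⁻¹ * T⁻¹) * T = (T * T⁻¹) * (T⁻¹ * T) := by simp only [Matrix.mul_assoc]
      _ = 1 := by rw [hTinv, hTinv', Matrix.mul_one]
  -- B C⁻¹ Bᵀ = S (M Mᵀ) S
  have hBt : Bᵀ = T * (Mᵀ * S) := by
    rw [hB, transpose_mul, transpose_mul, hSh, hTh]
  have hBCB : B * C⁻¹ * Bᵀ = S * (M * Mᵀ) * S := by
    rw [hBt, hB]
    calc S * M * T * C⁻¹ * (T * (Mᵀ * S))
        = S * (M * ((T * C⁻¹ * T) * (Mᵀ * S))) := by simp only [Matrix.mul_assoc]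
      _ = S * (M * Mᵀ) * S := by rw [hTCT, Matrix.one_mul]; simp only [Matrix.mul_assoc]
  -- eigenvalue bounds
  have hb : ∀ i, (Matrix.isHermitian_transpose_mul_self M).eigenvalues i ≤ β := by
    intro i
    rw [hβ]
    exact le_ciSup (Set.Finite.bddAbove (Set.finite_range _)) i
  have hb0 : 0 ≤ β := by
    rcases isEmpty_or_nonempty (Fin p) with hp | hp
    · rw [hβ, Real.iSup_of_isEmpty]
    · exact le_trans
        (Matrix.eigenvalues_conjTranspose_mul_self_nonneg M (Classical.arbitrary _)) (hb _)
  have hPSDp := smul_one_sub_posSemidef (Matrix.isHermitian_transpose_mul_self M) hb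
  have hPSDn := transfer hb0 hPSDp
  have hconj : (S * ((β • (1 : Matrix (Fin n) (Fin n) ℝ)) - M * Mᴴ) * S).PosSemidef := by
    have h2 := hPSDn.mul_mul_conjTranspose_same S
    have hSH : Sᴴ = S := psd_sqrt_hermitian hA.posSemidef
    rwa [hSH] at h2
  have htr := psd_trace_nonneg hconj
  have hexp : S * ((β • (1 : Matrix (Fin n) (Fin n) ℝ)) - M * Mᴴ) * S
      = β • A - S * (M * Mᴴ) * S := by
    rw [Matrix.mul_sub, Matrix.sub_mul, mul_smul_comm, Matrix.mul_one, smul_mul_assoc, hSS]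
  rw [hexp, conjTranspose_eq_transpose_of_trivial, trace_sub, trace_smul, smul_eq_mul,
    sub_nonneg] at htr
  rw [hBCB, trace_sub]
  linarith
end

section
/- Ky Fan maximum principle (projector form): for any symmetric positive semidefinite matrix F ∈ R^{m×m} with eigenvalues λ_1 ≥ ... ≥ λ_m and any orthogonal projector P of rank r, tr(P F) ≤ Σ_{i=1}^r λ_i. -/
open Matrix

lemma kyfan_trace_eq_rank {m : ℕ} (P : Matrix (Fin m) (Fin m) ℝ)
    (hPsymm : Pᵀ = P) (hPidem : P * P = P) : P.trace = (P.rank : ℝ) := by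
  classical
  have hH : P.IsHermitian := by
    rw [Matrix.IsHermitian]
    ext i j
    simp only [Matrix.conjTranspose_apply, star_trivial]
    exact congrFun (congrFun hPsymm i) j
  have heig : ∀ j, hH.eigenvalues j = 0 ∨ hH.eigenvalues j = 1 := by
    intro j
    set μ := hH.eigenvalues j with hμ
    have hv := hH.mulVec_eigenvectorBasis j
    have hv2 : P *ᵥ (P *ᵥ ⇑(hH.eigenvectorBasis j)) = (μ * μ) • ⇑(hH.eigenvectorBasis j) := by
      rw [hv, Matrix.mulVec_smul, hv, smul_smul]
    rw [Matrix.mulVec_mulVec, hPidem, hv] at hv2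
    have hne : ⇑(hH.eigenvectorBasis j) ≠ 0 := by
      have hb := hH.eigenvectorBasis.toBasis.ne_zero j
      rw [OrthonormalBasis.coe_toBasis] at hb
      intro h
      exact hb (by ext k; exact congrFun h k)
    have hz : (μ * μ - μ) • ⇑(hH.eigenvectorBasis j) = 0 := by
      rw [sub_smul, hv2, sub_self]
    rcases smul_eq_zero.mp hz with h | h
    · rcases mul_eq_zero.mp (show μ * (μ - 1) = 0 by nlinarith) with h1 | h1
      · exact Or.inl h1
      · exact Or.inr (by linarith)
    · exact absurd h hne
  have htr : P.trace = ∑ j, hH.eigenvalues j := by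
    conv_lhs => rw [hH.spectral_theorem]
    rw [Unitary.conjStarAlgAut_apply, Matrix.trace_mul_cycle, Unitary.coe_star_mul_self, Matrix.one_mul,
      Matrix.trace_diagonal]
    simp
  rw [htr, hH.rank_eq_card_non_zero_eigs, Fintype.card_subtype, Finset.card_filter]
  push_cast
  refine Finset.sum_congr rfl fun j _ => ?_
  rcases heig j with h | h <;> simp [h]

lemma kyfan_sum_aux {m : ℕ} (r : ℕ) (lam d : Fin m → ℝ)
    (hlam0 : ∀ i, 0 ≤ lam i)
    (hsorted : ∀ i j : Fin m, i ≤ j → lam j ≤ lam i)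
    (hd0 : ∀ i, 0 ≤ d i) (hd1 : ∀ i, d i ≤ 1)
    (hdsum : ∑ i, d i = (r : ℝ)) :
    ∑ i, lam i * d i ≤ ∑ i ∈ Finset.univ.filter (fun i : Fin m => (i : ℕ) < r), lam i := by
  by_cases hrm : r < m
  · set b : Fin m := ⟨r, hrm⟩ with hb
    have hS : Finset.univ.filter (fun i : Fin m => (i : ℕ) < r) = Finset.Iio b := by
      ext i; simp [Fin.lt_def, hb]
    have hcard : (Finset.Iio b).card = r := Fin.card_Iio b
    set c := lam b with hc
    rw [hS]
    have h1 : ∀ i, lam i * d i ≤ (if i ∈ Finset.Iio b then (lam i - c) else 0) + c * d i := by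
      intro i
      by_cases hib : i ∈ Finset.Iio b
      · have hlc : c ≤ lam i := hsorted i b (le_of_lt (Finset.mem_Iio.mp hib))
        simp only [hib, if_pos]
        nlinarith [hd0 i, hd1 i]
      · have hlc : lam i ≤ c := hsorted b i (not_lt.mp (fun h => hib (Finset.mem_Iio.mpr h)))
        simp only [hib, if_neg, not_false_iff]
        nlinarith [hd0 i]
    calc ∑ i, lam i * d i
        ≤ ∑ i, ((if i ∈ Finset.Iio b then (lam i - c) else 0) + c * d i) :=
          Finset.sum_le_sum fun i _ => h1 i
      _ = (∑ i ∈ Finset.Iio b, (lam i - c)) + c * ∑ i, d i := by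
          rw [Finset.sum_add_distrib, ← Finset.mul_sum]
          congr 1
          rw [← Finset.sum_filter]
          congr 1
          ext i; simp
      _ = ∑ i ∈ Finset.Iio b, lam i := by
          rw [hdsum, Finset.sum_sub_distrib, Finset.sum_const, hcard]
          ring
  · have huniv : Finset.univ.filter (fun i : Fin m => (i : ℕ) < r) = Finset.univ := by
      ext i
      simp only [Finset.mem_filter, Finset.mem_univ, true_and, iff_true]
      exact lt_of_lt_of_le i.isLt (not_lt.mp hrm)
    rw [huniv]
    exact Finset.sum_le_sum fun i _ => by nlinarith [hlam0 i, hd0 i, hd1 i]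

/-- Ky Fan maximum principle (projector form): for a symmetric PSD matrix
`F = W Λ Wᵀ` with eigenvalues `λ₁ ≥ ⋯ ≥ λ_m` and any orthogonal projector
`P` of rank `r`, `tr(P F) ≤ Σ_{i<r} λᵢ`. -/
theorem ky_fan_projector
    {m : ℕ} (F W : Matrix (Fin m) (Fin m) ℝ) (lam : Fin m → ℝ)
    (hF : F.PosSemidef)
    (hW : Wᵀ * W = 1)
    (hdecomp : F = W * Matrix.diagonal lam * Wᵀ)
    (hsorted : ∀ i j : Fin m, i ≤ j → lam j ≤ lam i)
    (P : Matrix (Fin m) (Fin m) ℝ)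
    (hPsymm : Pᵀ = P) (hPidem : P * P = P)
    (r : ℕ) (hr : P.rank = r) :
    (P * F).trace ≤ ∑ i ∈ Finset.univ.filter (fun i : Fin m => (i : ℕ) < r), lam i := by
  classical
  have hWW : W * Wᵀ = 1 := mul_eq_one_comm.mp hW
  have hWW' : ∀ X : Matrix (Fin m) (Fin m) ℝ, W * (Wᵀ * X) = X := fun X => by
    rw [← Matrix.mul_assoc, hWW, Matrix.one_mul]
  have hW' : ∀ X : Matrix (Fin m) (Fin m) ℝ, Wᵀ * (W * X) = X := fun X => by
    rw [← Matrix.mul_assoc, hW, Matrix.one_mul]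
  have hPP' : ∀ X : Matrix (Fin m) (Fin m) ℝ, P * (P * X) = P * X := fun X => by
    rw [← Matrix.mul_assoc, hPidem]
  set M := Wᵀ * P * W with hM
  have hMt : Mᵀ = M := by
    rw [hM, Matrix.transpose_mul, Matrix.transpose_mul, Matrix.transpose_transpose, hPsymm,
      Matrix.mul_assoc]
  have hMH : Mᴴ = M := by
    have : Mᴴ = Mᵀ := by ext i j; simp [Matrix.conjTranspose_apply]
    rw [this, hMt]
  have hMidem : M * M = M := by
    simp only [hM, Matrix.mul_assoc, hWW', hPP']
  have hMpsd : M.PosSemidef := by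
    have h := Matrix.posSemidef_conjTranspose_mul_self M
    rwa [hMH, hMidem] at h
  have hNpsd : (1 - M).PosSemidef := by
    have hNt : (1 - M)ᴴ = 1 - M := by
      have : (1 - M)ᴴ = 1 - Mᴴ := by simp
      rw [this, hMH]
    have hNidem : (1 - M) * (1 - M) = 1 - M := by
      have : (1 - M) * (1 - M) = 1 - M - M + M * M := by noncomm_ring
      rw [this, hMidem]; abel
    have h := Matrix.posSemidef_conjTranspose_mul_self (1 - M)
    rwa [hNt, hNidem] at h
  have hd0 : ∀ i, 0 ≤ M i i := by
    intro i
    have h := hMpsd.dotProduct_mulVec_nonneg (Pi.single i 1)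
    simpa [dotProduct, Matrix.mulVec_single, Pi.single_apply] using h
  have hd1 : ∀ i, M i i ≤ 1 := by
    intro i
    have h := hNpsd.dotProduct_mulVec_nonneg (Pi.single i 1)
    have h2 : (0:ℝ) ≤ (1 - M) i i := by
      simpa [dotProduct, Matrix.mulVec_single, Pi.single_apply] using h
    have : (1 - M) i i = 1 - M i i := by simp [Matrix.sub_apply, Matrix.one_apply]
    linarith [this ▸ h2]
  have hdsum : ∑ i, M i i = (r : ℝ) := by
    have h1 : M.trace = P.trace := by
      rw [hM, Matrix.trace_mul_cycle, hWW, Matrix.one_mul]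
    have h2 : P.trace = (r : ℝ) := by
      rw [kyfan_trace_eq_rank P hPsymm hPidem, hr]
    have : M.trace = ∑ i, M i i := rfl
    rw [← this, h1, h2]
  have hDpsd : (Matrix.diagonal lam).PosSemidef := by
    have h := hF.mul_mul_conjTranspose_same Wᵀ
    have hWtH : (Wᵀ)ᴴ = W := by
      have : (Wᵀ)ᴴ = Wᵀᵀ := by ext i j; simp [Matrix.conjTranspose_apply]
      rw [this, Matrix.transpose_transpose]
    rw [hWtH, hdecomp] at h
    have heq : Wᵀ * (W * Matrix.diagonal lam * Wᵀ) * W = Matrix.diagonal lam := by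
      simp only [Matrix.mul_assoc, hW']
      rw [hW, Matrix.mul_one]
    rwa [heq] at h
  have hlam0 : ∀ i, 0 ≤ lam i := Matrix.posSemidef_diagonal_iff.mp hDpsd
  have htrace : (P * F).trace = ∑ i, M i i * lam i := by
    have h1 : P * F = (P * W * Matrix.diagonal lam) * Wᵀ := by
      rw [hdecomp]; simp only [Matrix.mul_assoc]
    have h2 : (P * F).trace = (M * Matrix.diagonal lam).trace := by
      rw [h1, Matrix.trace_mul_comm, hM]
      simp only [Matrix.mul_assoc]
    rw [h2]
    simp [Matrix.trace, Matrix.diag, Matrix.mul_diagonal, mul_comm]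
  rw [htrace]
  simp only [mul_comm]
  exact kyfan_sum_aux r lam (fun i => M i i) hlam0 hsorted hd0 hd1 hdsum
end
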